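/- Let X be a topological space with a cover 𝒴 such that |𝒴| ≤ 𝔠, every Y ∈ 𝒴 is countably tight, and X = ⋃{cl(A) : A ⊆ Y, |A| ≤ 𝔠} for every Y ∈ 𝒴. Assume moreover that for every set D ⊆ X with |D| ≤ 𝔠, the closure cl(D) is Lindelöf and has pseudocharacter ψ(cl(D), X) ≤ 𝔠. Then X has a dense subset of cardinality at most 𝔠, i.e., d(X) ≤ 𝔠. -/

import Mathlib

open Set Cardinal

/-- A topological space `Z` is countably tight if whenever a point lies in the closure
of a set `A`, it lies in the closure of a countable subset of `A`. -/
def CountablyTight (Z : Type*) [TopologicalSpace Z] : Prop :=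
  ∀ (A : Set Z) (z : Z), z ∈ closure A → ∃ B ⊆ A, B.Countable ∧ z ∈ closure B

/-- The pseudocharacter of the subset `Z` in `X` is at most `κ`: `Z` is the
intersection of at most `κ` many open subsets of `X`. -/
def PseudoCharLE {X : Type*} [TopologicalSpace X] (Z : Set X) (κ : Cardinal) : Prop :=
  ∃ 𝒰 : Set (Set X), (∀ U ∈ 𝒰, IsOpen U) ∧ #𝒰 ≤ κ ∧ ⋂₀ 𝒰 = Z

/-!
A closing-off argument of length `ω₁` gives `D` with `#D ≤ 𝔠` that is closed under all operations
of countable arity producing at most `𝔠` points. Chosen suitably, these make `D ⊆ closure (D ∩ Y)`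
for every `Y ∈ 𝒴`, and make every countable family of open sets drawn from the pseudocharacter
families of closures of countable subsets of `D` either cover `X` or miss a point of `D`.
If `y ∉ closure D`, a point `x ∈ closure D` lies in some countably tight `Y ∈ 𝒴`, hence in the
closure of a countable `C ⊆ D`, and a member of the family of `closure C` contains `x` but not `y`.
Countably many of these cover the Lindelöf set `closure D`, hence `D`, hence `X`, yet miss `y`.
-/
universe u

section CountableClosure

open Ordinal

variable {α β : Type u}

theorem Cardinal.mk_iUnion_le_of_le {ι : Type u} {f : ι → Set α} {κ : Cardinal.{u}}
    (hκ : ℵ₀ ≤ κ) (hι : #ι ≤ κ) (hf : ∀ i, #(f i) ≤ κ) : #(⋃ i, f i) ≤ κ :=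
  (mk_iUnion_le f).trans (mul_le_of_le hκ hι (ciSup_le' hf))

theorem Cardinal.mk_countable_subsets_le {S : Set α} {κ : Cardinal.{u}} (hκ : ℵ₀ ≤ κ)
    (hκω : κ ^ ℵ₀ ≤ κ) (hS : #S ≤ κ) : #{C : Set α // C ⊆ S ∧ C.Countable} ≤ κ :=
  calc #{C : Set α // C ⊆ S ∧ C.Countable}
      _ ≤ #{C : Set α // C ⊆ S ∧ #C ≤ ℵ₀} :=
        mk_subtype_mono fun _ hC => ⟨hC.1, hC.2.le_aleph0⟩
      _ ≤ max #S ℵ₀ ^ ℵ₀ := mk_bounded_subset_le S ℵ₀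
      _ ≤ κ ^ ℵ₀ := power_le_power_right (max_le hS hκ)
      _ ≤ κ := hκω

def iUnionCountableSubsets (F : Set α → Set β) (S : Set α) : Set β :=
  ⋃ C : {C : Set α // C ⊆ S ∧ C.Countable}, F C.1

variable {F : Set α → Set β} {S : Set α}

theorem mem_iUnionCountableSubsets {b : β} :
    b ∈ iUnionCountableSubsets F S ↔ ∃ C ⊆ S, C.Countable ∧ b ∈ F C := by
  simp [iUnionCountableSubsets, and_assoc]

theorem subset_iUnionCountableSubsets {C : Set α} (hCS : C ⊆ S) (hC : C.Countable) :
    F C ⊆ iUnionCountableSubsets F S :=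
  subset_iUnion (fun C : {C : Set α // C ⊆ S ∧ C.Countable} => F C.1) ⟨C, hCS, hC⟩

theorem mk_iUnionCountableSubsets_le {κ : Cardinal.{u}} (hκ : ℵ₀ ≤ κ) (hκω : κ ^ ℵ₀ ≤ κ)
    (hF : ∀ C, C.Countable → #(F C) ≤ κ) (hS : #S ≤ κ) : #(iUnionCountableSubsets F S) ≤ κ :=
  mk_iUnion_le_of_le hκ (mk_countable_subsets_le hκ hκω hS) fun C => hF C.1 C.2.2

theorem exists_countable_subset_of_subset_iUnionCountableSubsets {V : Set β} (hV : V.Countable)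
    (hVS : V ⊆ iUnionCountableSubsets F S) :
    ∃ C ⊆ S, C.Countable ∧ V ⊆ iUnionCountableSubsets F C := by
  choose C hCS hC hvC using fun v : V => mem_iUnionCountableSubsets.1 (hVS v.2)
  have := hV.to_subtype
  refine ⟨⋃ v, C v, iUnion_subset hCS, countable_iUnion hC, fun v hv => ?_⟩
  exact subset_iUnionCountableSubsets (subset_iUnion C ⟨v, hv⟩) (hC _) (hvC ⟨v, hv⟩)

noncomputable def countableClosureSeq (G : Set α → Set α) : Ordinal.{u} → Set α :=
  wellFounded_lt.fix fun o E =>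
    (⋃ p, ⋃ h : p < o, E p h) ∪ iUnionCountableSubsets G (⋃ p, ⋃ h : p < o, E p h)

variable {G : Set α → Set α}

theorem countableClosureSeq_eq (o : Ordinal.{u}) :
    countableClosureSeq G o = (⋃ p < o, countableClosureSeq G p) ∪
      iUnionCountableSubsets G (⋃ p < o, countableClosureSeq G p) := by
  rw [countableClosureSeq, WellFounded.fix_eq]

theorem mk_countableClosureSeq_le {κ : Cardinal.{u}} (hκ : ℵ₀ ≤ κ) (hκω : κ ^ ℵ₀ ≤ κ)
    (hG : ∀ C, C.Countable → #(G C) ≤ κ) {o : Ordinal.{u}} (ho : o.card ≤ κ) :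
    #(countableClosureSeq G o) ≤ κ := by
  induction o using WellFoundedLT.induction with
  | ind o ih =>
    have hprev : #(⋃ p < o, countableClosureSeq G p) ≤ κ :=
      mk_biUnion_le_of_le ho hκ _ fun p hp => ih p hp ((card_le_card hp.le).trans ho)
    rw [countableClosureSeq_eq]
    exact (mk_union_le _ _).trans
      (add_le_of_le hκ hprev (mk_iUnionCountableSubsets_le hκ hκω hG hprev))

theorem exists_lt_omega_one_subset_biUnion (E : Ordinal.{u} → Set α) {C : Set α}
    (hC : C.Countable) (hCE : C ⊆ ⋃ o < ω₁, E o) : ∃ o < ω₁, C ⊆ ⋃ p < o, E p := by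
  choose f hf hfE using fun c : C => mem_iUnion₂.1 (hCE c.2)
  have := hC.to_subtype
  refine ⟨⨆ c, Order.succ (f c),
    iSup_lt_omega_one fun c => (isSuccLimit_omega 1).succ_lt (hf c), fun c hc => ?_⟩
  exact mem_iUnion₂.2 ⟨f ⟨c, hc⟩,
    (Order.lt_succ (f _)).trans_le (Ordinal.le_iSup (fun c => Order.succ (f c)) _), hfE _⟩

theorem exists_mk_le_countably_closed {κ : Cardinal.{u}} (hκ : ℵ₁ ≤ κ)
    (hκω : κ ^ ℵ₀ ≤ κ) (G : Set α → Set α) (hG : ∀ C, C.Countable → #(G C) ≤ κ) :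
    ∃ D : Set α, #D ≤ κ ∧ ∀ C ⊆ D, C.Countable → G C ⊆ D := by
  have hκ₀ : ℵ₀ ≤ κ := aleph0_lt_aleph_one.le.trans hκ
  have hω₁ : (ω₁ : Ordinal.{u}).card ≤ κ := by rwa [card_omega]
  refine ⟨⋃ o < ω₁, countableClosureSeq G o, mk_biUnion_le_of_le hω₁ hκ₀ _ fun o ho =>
    mk_countableClosureSeq_le hκ₀ hκω hG ((card_le_card ho.le).trans hω₁), fun C hCD hC => ?_⟩
  obtain ⟨o, ho, hCo⟩ := exists_lt_omega_one_subset_biUnion _ hC hCD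
  calc G C ⊆ countableClosureSeq G o := by
        rw [countableClosureSeq_eq]
        exact (subset_iUnionCountableSubsets hCo hC).trans subset_union_right
    _ ⊆ ⋃ o < ω₁, countableClosureSeq G o := fun x hx => mem_iUnion₂.2 ⟨o, ho, hx⟩

end CountableClosure

section Topology

variable {X : Type u} [TopologicalSpace X]

theorem CountablyTight.exists_countable_subset_mem_closure {Y B : Set X}
    (hY : CountablyTight Y) (hBY : B ⊆ Y) {x : X} (hxY : x ∈ Y) (hx : x ∈ closure B) :
    ∃ C ⊆ B, C.Countable ∧ x ∈ closure C := by
  have hx' : (⟨x, hxY⟩ : Y) ∈ closure (Subtype.val ⁻¹' B : Set Y) := by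
    rwa [closure_subtype, Subtype.image_preimage_coe, inter_eq_right.2 hBY]
  obtain ⟨C, hCB, hC, hxC⟩ := hY _ _ hx'
  exact ⟨Subtype.val '' C, image_subset_iff.2 hCB, hC.image _, by rwa [closure_subtype] at hxC⟩

theorem exists_countable_subset_mem_closure_of_sUnion_eq_univ {𝒴 : Set (Set X)}
    (h𝒴cover : ⋃₀ 𝒴 = Set.univ) (h𝒴ct : ∀ Y ∈ 𝒴, CountablyTight Y) {D : Set X}
    (hD : ∀ Y ∈ 𝒴, D ⊆ closure (D ∩ Y)) {x : X} (hx : x ∈ closure D) :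
    ∃ C ⊆ D, C.Countable ∧ x ∈ closure C := by
  obtain ⟨Y, hY, hxY⟩ : x ∈ ⋃₀ 𝒴 := h𝒴cover ▸ mem_univ x
  obtain ⟨C, hCD, hC, hxC⟩ := (h𝒴ct Y hY).exists_countable_subset_mem_closure
    inter_subset_right hxY (closure_minimal (hD Y hY) isClosed_closure hx)
  exact ⟨C, hCD.trans inter_subset_left, hC, hxC⟩

theorem dense_of_isLindelof_closure {D : Set X} {𝒪 : Set (Set X)} (h𝒪 : ∀ U ∈ 𝒪, IsOpen U)
    (hD : IsLindelof (closure D)) (hsep : ∀ x ∈ closure D, ∀ y ∉ closure D, ∃ U ∈ 𝒪, x ∈ U ∧ y ∉ U)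
    (hcov : ∀ V ⊆ 𝒪, V.Countable → D ⊆ ⋃₀ V → ⋃₀ V = Set.univ) : Dense D := by
  intro y
  by_contra hy
  choose U hU𝒪 hxU hyU using fun x : closure D => hsep x x.2 y hy
  obtain ⟨t, ht, hDt⟩ := hD.elim_countable_subcover U (fun x => h𝒪 _ (hU𝒪 x))
    fun x hx => mem_iUnion.2 ⟨⟨x, hx⟩, hxU _⟩
  have hDt' : closure D ⊆ ⋃₀ (U '' t) := by rwa [sUnion_image]
  have hy' : y ∈ ⋃₀ (U '' t) :=
    hcov _ (image_subset_iff.2 fun x _ => hU𝒪 x) (ht.image U) (subset_closure.trans hDt') ▸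
      mem_univ y
  obtain ⟨_, ⟨x, -, rfl⟩, hyx⟩ := hy'
  exact hyU x hyx

end Topology

section ClosingOff

variable {X : Type u} {𝒴 : Set (Set X)} {A : ∀ Y ∈ 𝒴, X → Set X}
  {𝒰 : Set X → Set (Set X)} {w : Set (Set X) → X}

/-- In the application `a ∈ closure (A Y a) ⊆ Y`, `𝒰 C` witnesses `ψ(closure C, X) ≤ 𝔠`, and
`w V ∉ ⋃₀ V` unless `V` covers `X`. -/
def closingOffStep (A : ∀ Y ∈ 𝒴, X → Set X) (𝒰 : Set X → Set (Set X)) (w : Set (Set X) → X)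
    (C : Set X) : Set X :=
  (⋃ a : C, ⋃ Y : 𝒴, A Y Y.2 a) ∪ w '' {V | V ⊆ iUnionCountableSubsets 𝒰 C ∧ V.Countable}

theorem mk_closingOffStep_le (h𝒴card : #𝒴 ≤ 𝔠) (hAcard : ∀ Y hY x, #(A Y hY x) ≤ 𝔠)
    (h𝒰card : ∀ C : Set X, C.Countable → #(𝒰 C) ≤ 𝔠) {C : Set X} (hC : C.Countable) :
    #(closingOffStep A 𝒰 w C) ≤ 𝔠 := by
  have hC' : #C ≤ 𝔠 := hC.le_aleph0.trans aleph0_le_continuum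
  have hpool : #(iUnionCountableSubsets 𝒰 C) ≤ 𝔠 :=
    mk_iUnionCountableSubsets_le aleph0_le_continuum continuum_power_aleph0.le h𝒰card hC'
  refine (mk_union_le _ _).trans (add_le_of_le aleph0_le_continuum ?_ ?_)
  · exact mk_iUnion_le_of_le aleph0_le_continuum hC' fun a =>
      mk_iUnion_le_of_le aleph0_le_continuum h𝒴card fun Y => hAcard _ _ _
  · exact mk_image_le.trans
      (mk_countable_subsets_le aleph0_le_continuum continuum_power_aleph0.le hpool)

theorem dense_of_closingOffStep_subset [TopologicalSpace X] (h𝒴cover : ⋃₀ 𝒴 = Set.univ)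
    (h𝒴ct : ∀ Y ∈ 𝒴, CountablyTight Y) (hAY : ∀ Y hY x, A Y hY x ⊆ Y)
    (hxA : ∀ Y hY x, x ∈ closure (A Y hY x)) (h𝒰open : ∀ C, C.Countable → ∀ U ∈ 𝒰 C, IsOpen U)
    (h𝒰eq : ∀ C, C.Countable → ⋂₀ 𝒰 C = closure C)
    (hw : ∀ V : Set (Set X), ⋃₀ V ≠ Set.univ → w V ∉ ⋃₀ V)
    {D : Set X} (hLin : IsLindelof (closure D))
    (hD : ∀ C ⊆ D, C.Countable → closingOffStep A 𝒰 w C ⊆ D) : Dense D := by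
  have hDY : ∀ Y ∈ 𝒴, D ⊆ closure (D ∩ Y) := by
    intro Y hY a ha
    have hAD : A Y hY a ⊆ D := fun x hx => hD {a} (singleton_subset_iff.2 ha)
      (countable_singleton a) (Or.inl (mem_iUnion₂.2 ⟨⟨a, rfl⟩, ⟨Y, hY⟩, hx⟩))
    exact closure_mono (subset_inter hAD (hAY Y hY a)) (hxA Y hY a)
  refine dense_of_isLindelof_closure (𝒪 := iUnionCountableSubsets 𝒰 D) ?_ hLin ?_ ?_
  · intro U hU
    obtain ⟨C, -, hC, hUC⟩ := mem_iUnionCountableSubsets.1 hU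
    exact h𝒰open C hC U hUC
  · intro x hx y hy
    obtain ⟨C, hCD, hC, hxC⟩ :=
      exists_countable_subset_mem_closure_of_sUnion_eq_univ h𝒴cover h𝒴ct hDY hx
    have hyC : y ∉ ⋂₀ 𝒰 C := h𝒰eq C hC ▸ fun h => hy (closure_mono hCD h)
    obtain ⟨U, hU, hyU⟩ : ∃ U ∈ 𝒰 C, y ∉ U := by simpa using hyC
    exact ⟨U, subset_iUnionCountableSubsets hCD hC hU, (h𝒰eq C hC ▸ hxC : x ∈ ⋂₀ 𝒰 C) U hU, hyU⟩
  · intro V hVD hV hDV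
    by_contra hne
    obtain ⟨C, hCD, hC, hVC⟩ := exists_countable_subset_of_subset_iUnionCountableSubsets hV hVD
    exact hw V hne (hDV (hD C hCD hC (Or.inr ⟨V, ⟨hVC, hV⟩, rfl⟩)))

end ClosingOff

theorem stmt_7 {X : Type u} [TopologicalSpace X]
    (𝒴 : Set (Set X))
    (h𝒴card : #𝒴 ≤ continuum)
    (h𝒴cover : ⋃₀ 𝒴 = Set.univ)
    (h𝒴ct : ∀ Y ∈ 𝒴, CountablyTight ↥Y)
    (h𝒴big : ∀ Y ∈ 𝒴, ∀ x : X, ∃ A ⊆ Y, #A ≤ continuum ∧ x ∈ closure A)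
    (hLin : ∀ D : Set X, #D ≤ continuum → LindelofSpace ↥(closure D))
    (hpsi : ∀ D : Set X, #D ≤ continuum → PseudoCharLE (closure D) continuum) :
    ∃ D : Set X, Dense D ∧ #D ≤ continuum := by
  rcases isEmpty_or_nonempty X with hX | hX
  · exact ⟨∅, fun x => isEmptyElim x, by simp⟩
  choose A hAY hAcard hxA using h𝒴big
  have hψ : ∀ C : Set X, ∃ 𝒰 : Set (Set X),
      C.Countable → (∀ U ∈ 𝒰, IsOpen U) ∧ #𝒰 ≤ 𝔠 ∧ ⋂₀ 𝒰 = closure C := by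
    intro C
    by_cases hC : C.Countable
    · obtain ⟨𝒰, h𝒰⟩ := hpsi C (hC.le_aleph0.trans aleph0_le_continuum)
      exact ⟨𝒰, fun _ => h𝒰⟩
    · exact ⟨∅, fun h => absurd h hC⟩
  choose 𝒰 h𝒰 using hψ
  have hw : ∀ V : Set (Set X), ∃ p, ⋃₀ V ≠ Set.univ → p ∉ ⋃₀ V := by
    intro V
    by_cases hV : ⋃₀ V = Set.univ
    · exact ⟨hX.some, fun h => absurd hV h⟩
    · exact ((ne_univ_iff_exists_notMem _).1 hV).imp fun _ hp _ => hp
  choose w hw using hw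
  obtain ⟨D, hDcard, hD⟩ := exists_mk_le_countably_closed aleph_one_le_continuum
    continuum_power_aleph0.le (closingOffStep A 𝒰 w) fun C hC =>
      mk_closingOffStep_le h𝒴card hAcard (fun C hC => (h𝒰 C hC).2.1) hC
  refine ⟨D, dense_of_closingOffStep_subset h𝒴cover h𝒴ct hAY hxA (fun C hC => (h𝒰 C hC).1)
    (fun C hC => (h𝒰 C hC).2.2) hw (isLindelof_iff_lindelofSpace.2 (hLin D hDcard)) hD, hDcard⟩
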